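/- Let G be an unmixed König graph with a maximal matching {e_1,...,e_m} where τ(G) = ν(G) = m, and let k be the number of induced matchings of G contained in {e_1,...,e_m}. Then mi(G) ≤ k + 1, where mi(G) is the number of maximal independent sets of G. -/

import Mathlib

noncomputable def dimNat (R : Type*) [CommRing R] : ℕ :=
  (WithBot.unbotD 0 (ringKrullDim R)).untopD 0

/-- The edge ideal of a graph: generated by the products `X u * X v` over edges. -/
noncomputable def edgeIdeal {V : Type*} (G : SimpleGraph V) (K : Type*) [Field K] :
    Ideal (MvPolynomial V K) :=
  Ideal.span {p | ∃ u v : V, G.Adj u v ∧ p = MvPolynomial.X u * MvPolynomial.X v}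

/-- The vertex cover number `τ(G)`. -/
noncomputable def tauNum {V : Type*} (G : SimpleGraph V) : ℕ :=
  sInf {k | ∃ c : Finset V, (∀ e ∈ G.edgeSet, ∃ v ∈ c, v ∈ e) ∧ c.card = k}

/-- A matching: a finite set of edges, pairwise sharing no vertex. -/
def IsMatchingSet {V : Type*} (G : SimpleGraph V) (M : Finset (Sym2 V)) : Prop :=
  (↑M : Set (Sym2 V)) ⊆ G.edgeSet ∧
    ∀ e ∈ M, ∀ f ∈ M, e ≠ f → ∀ v : V, ¬ (v ∈ e ∧ v ∈ f)

/-- The matching number `ν(G)`. -/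
noncomputable def nuNum {V : Type*} (G : SimpleGraph V) : ℕ :=
  sSup {k | ∃ M : Finset (Sym2 V), IsMatchingSet G M ∧ M.card = k}

/-- An independent set of vertices. -/
def IsIndepSet {V : Type*} (G : SimpleGraph V) (s : Finset V) : Prop :=
  ∀ u ∈ s, ∀ v ∈ s, ¬ G.Adj u v

/-- A maximal independent set of vertices. -/
def IsMaxIndepSet {V : Type*} (G : SimpleGraph V) (s : Finset V) : Prop :=
  IsIndepSet G s ∧ ∀ t : Finset V, IsIndepSet G t → s ⊆ t → t = s

/-- `mi(G)`: the number of maximal independent sets of `G`. -/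
noncomputable def miNum {V : Type*} (G : SimpleGraph V) : ℕ :=
  Set.ncard {s : Finset V | IsMaxIndepSet G s}

/-- A set of edges is an induced matching: pairwise, the edges form gaps (their endpoints
are distinct and non-adjacent). -/
def IsInducedMatchingSet {V : Type*} (G : SimpleGraph V) (A : Finset (Sym2 V)) : Prop :=
  (↑A : Set (Sym2 V)) ⊆ G.edgeSet ∧
    ∀ e ∈ A, ∀ f ∈ A, e ≠ f → ∀ u ∈ e, ∀ v ∈ f, u ≠ v ∧ ¬ G.Adj u v

/-- The number of nonempty induced matchings of `G` contained in a given edge set `M`. -/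
noncomputable def inducedMatchingsIn {V : Type*} (G : SimpleGraph V)
    (M : Finset (Sym2 V)) : ℕ :=
  Set.ncard {A : Finset (Sym2 V) | A ⊆ M ∧ A.Nonempty ∧ IsInducedMatchingSet G A}

/-- Let `G` be an unmixed König graph and `{e₁,…,e_m}` a maximal
matching with `τ(G) = ν(G) = m`; let `k` be the number of (nonempty) induced matchings of
`G` contained in `{e₁,…,e_m}`.  Then `mi(G) ≤ k + 1`. -/
theorem miNum_le_inducedMatchings_add_one {V : Type*} [Fintype V] [DecidableEq V]
    (G : SimpleGraph V)
    (hunmixed : ∀ s t : Finset V, IsMaxIndepSet G s → IsMaxIndepSet G t → s.card = t.card)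
    (M : Finset (Sym2 V)) (hM : IsMatchingSet G M)
    (hMmax : ∀ e ∈ G.edgeSet, e ∉ M → ¬ IsMatchingSet G (insert e M))
    (htau : tauNum G = M.card) (hnu : nuNum G = M.card) :
    miNum G ≤ inducedMatchingsIn G M + 1 := by

  classical
  clear hnu hMmax
  unfold miNum inducedMatchingsIn
  -- basic facts about covers
  have hedgeM : ∀ e ∈ M, e ∈ G.edgeSet := fun e he => hM.1 he
  have hLE : ∀ c : Finset V, (∀ e ∈ G.edgeSet, ∃ v ∈ c, v ∈ e) → M.card ≤ c.card := by
    intro c hc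
    have h1 : tauNum G ≤ c.card := Nat.sInf_le ⟨c, hc, rfl⟩
    omega
  have hcovuniv : ∀ e ∈ G.edgeSet, ∃ v ∈ (Finset.univ : Finset V), v ∈ e := by
    intro e _
    induction e using Sym2.ind with
    | _ x y => exact ⟨x, Finset.mem_univ x, Sym2.mem_mk_left x y⟩
  have hc0 : ∃ c : Finset V, (∀ e ∈ G.edgeSet, ∃ v ∈ c, v ∈ e) ∧ c.card = M.card := by
    have hne : {k | ∃ c : Finset V, (∀ e ∈ G.edgeSet, ∃ v ∈ c, v ∈ e) ∧ c.card = k}.Nonempty :=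
      ⟨Finset.univ.card, Finset.univ, hcovuniv, rfl⟩
    have h1 := Nat.sInf_mem hne
    unfold tauNum at htau
    rw [htau] at h1
    exact h1
  obtain ⟨c₀, hc₀cov, hc₀card⟩ := hc0
  have hmn : M.card ≤ Fintype.card V := by
    have := Finset.card_le_univ c₀
    rw [hc₀card] at this
    simpa using this
  -- complements
  have hcover_of_indep : ∀ s : Finset V, IsIndepSet G s →
      ∀ e ∈ G.edgeSet, ∃ v ∈ Finset.univ \ s, v ∈ e := by
    intro s hs e he
    induction e using Sym2.ind with
    | _ x y =>
      rw [SimpleGraph.mem_edgeSet] at he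
      by_cases hx : x ∈ s
      · refine ⟨y, ?_, Sym2.mem_mk_right x y⟩
        simp only [Finset.mem_sdiff, Finset.mem_univ, true_and]
        intro hy; exact hs x hx y hy he
      · exact ⟨x, by simp [hx], Sym2.mem_mk_left x y⟩
  have hindep_of_cover : ∀ c : Finset V, (∀ e ∈ G.edgeSet, ∃ v ∈ c, v ∈ e) →
      IsIndepSet G (Finset.univ \ c) := by
    intro c hc u hu v hv hadj
    obtain ⟨w, hwc, hwe⟩ := hc s(u, v) ((SimpleGraph.mem_edgeSet G).mpr hadj)
    rw [Sym2.mem_iff] at hwe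
    simp only [Finset.mem_sdiff, Finset.mem_univ, true_and] at hu hv
    rcases hwe with rfl | rfl
    · exact hu hwc
    · exact hv hwc
  -- extension to maximal independent sets
  have hext : ∀ s : Finset V, IsIndepSet G s → ∃ t, s ⊆ t ∧ IsMaxIndepSet G t := by
    intro s hs
    obtain ⟨t, ht, htmax⟩ := Finset.exists_max_image
      ((Finset.univ : Finset (Finset V)).filter fun t => IsIndepSet G t ∧ s ⊆ t)
      Finset.card ⟨s, by simp [hs]⟩
    simp only [Finset.mem_filter, Finset.mem_univ, true_and] at ht htmax
    refine ⟨t, ht.2, ht.1, ?_⟩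
    intro t' ht' hsub
    exact (Finset.eq_of_subset_of_card_le hsub
      (htmax t' ⟨ht', ht.2.trans hsub⟩)).symm
  -- all maximal independent sets have cardinality n - m
  have hcard : ∀ S : Finset V, IsMaxIndepSet G S → S.card = Fintype.card V - M.card := by
    obtain ⟨S₁, hS₁sub, hS₁⟩ := hext (Finset.univ \ c₀) (hindep_of_cover c₀ hc₀cov)
    have hS₁card : Fintype.card V - M.card ≤ S₁.card := by
      have h := Finset.card_le_card hS₁sub
      rw [Finset.card_univ_diff, hc₀card] at h
      exact h
    intro S hS
    have h1 : M.card ≤ (Finset.univ \ S).card := hLE _ (hcover_of_indep S hS.1)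
    rw [Finset.card_univ_diff] at h1
    have h2 := Finset.card_le_univ S
    have h3 := hunmixed S S₁ hS hS₁
    omega
  -- key structural lemma: outside a MIS, vertices lie in matching edges whose partner is inside
  have keyL : ∀ S : Finset V, IsMaxIndepSet G S → ∀ v, v ∉ S →
      ∃ e ∈ M, v ∈ e ∧ ∀ w ∈ e, w ≠ v → w ∈ S := by
    intro S hS
    have hpick : ∀ e : Sym2 V, ∃ x, x ∈ e ∧ (e ∈ M → x ∉ S) := by
      intro e
      induction e using Sym2.ind with
      | _ x y =>
        by_cases he : s(x, y) ∈ M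
        · have hadj : G.Adj x y := (SimpleGraph.mem_edgeSet G).mp (hedgeM _ he)
          by_cases hx : x ∈ S
          · exact ⟨y, Sym2.mem_mk_right x y, fun _ hy => hS.1 x hx y hy hadj⟩
          · exact ⟨x, Sym2.mem_mk_left x y, fun _ => hx⟩
        · exact ⟨x, Sym2.mem_mk_left x y, fun h => absurd h he⟩
    choose f hf1 hf2 using hpick
    have hinj : Set.InjOn f M := by
      intro e₁ h₁ e₂ h₂ hfe
      by_contra hne
      exact hM.2 e₁ h₁ e₂ h₂ hne (f e₁) ⟨hf1 e₁, hfe ▸ hf1 e₂⟩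
    have himage : M.image f = Finset.univ \ S := by
      apply Finset.eq_of_subset_of_card_le
      · intro v hv
        obtain ⟨e, he, rfl⟩ := Finset.mem_image.mp hv
        simp only [Finset.mem_sdiff, Finset.mem_univ, true_and]
        exact hf2 e he
      · rw [Finset.card_image_of_injOn hinj, Finset.card_univ_diff, hcard S hS]
        omega
    intro v hv
    have hvmem : v ∈ M.image f := by
      rw [himage]; simp [hv]
    obtain ⟨e, he, hfe⟩ := Finset.mem_image.mp hvmem
    refine ⟨e, he, hfe ▸ hf1 e, ?_⟩
    intro w hwe hwv
    by_contra hwS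
    have hwmem : w ∈ M.image f := by
      rw [himage]; simp [hwS]
    obtain ⟨e', he', hfe'⟩ := Finset.mem_image.mp hwmem
    have hee : e' = e := by
      by_contra hne
      exact hM.2 e' he' e he hne w ⟨hfe' ▸ hf1 e', hwe⟩
    exact hwv (by rw [← hfe, ← hee, hfe'])
  -- the base maximal independent set and the orientation of matching edges
  obtain ⟨S₀, -, hS₀⟩ := hext ∅ (fun u hu => absurd hu (by simp))
  have hab' : ∀ e : Sym2 V, ∃ x y, e = s(x, y) ∧ (e ∈ M → x ∈ S₀ ∧ y ∉ S₀) := by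
    intro e
    induction e using Sym2.ind with
    | _ x y =>
      by_cases he : s(x, y) ∈ M
      · have hadj : G.Adj x y := (SimpleGraph.mem_edgeSet G).mp (hedgeM _ he)
        by_cases hx : x ∈ S₀
        · exact ⟨x, y, rfl, fun _ => ⟨hx, fun hy => hS₀.1 x hx y hy hadj⟩⟩
        · obtain ⟨e', he', hxe', hw⟩ := keyL S₀ hS₀ x hx
          have hee : e' = s(x, y) := by
            by_contra hne
            exact hM.2 e' he' s(x, y) he hne x ⟨hxe', Sym2.mem_mk_left x y⟩
          subst hee
          have hy : y ∈ S₀ :=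
            hw y (Sym2.mem_mk_right x y) (fun h => hadj.ne h.symm)
          exact ⟨y, x, Sym2.eq_swap, fun _ => ⟨hy, hx⟩⟩
      · exact ⟨x, y, rfl, fun h => absurd h he⟩
  choose va vb heab hab using hab'
  have haS₀ : ∀ e ∈ M, va e ∈ S₀ := fun e he => (hab e he).1
  have hadj_ab : ∀ e ∈ M, G.Adj (va e) (vb e) := by
    intro e he
    have h := hedgeM e he
    rw [heab e, SimpleGraph.mem_edgeSet] at h
    exact h
  have hmem_a : ∀ e : Sym2 V, va e ∈ e := by
    intro e
    have h := Sym2.mem_mk_left (va e) (vb e)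
    rwa [← heab e] at h
  have hmem_b : ∀ e : Sym2 V, vb e ∈ e := by
    intro e
    have h := Sym2.mem_mk_right (va e) (vb e)
    rwa [← heab e] at h
  have hmemiff : ∀ (e : Sym2 V) (w : V), w ∈ e ↔ (w = va e ∨ w = vb e) := by
    intro e w
    conv_lhs => rw [heab e]
    exact Sym2.mem_iff
  have hone : ∀ S : Finset V, IsMaxIndepSet G S → ∀ e ∈ M, (va e ∈ S ↔ vb e ∉ S) := by
    intro S hS e he
    constructor
    · intro haS hbS
      exact hS.1 _ haS _ hbS (hadj_ab e he)
    · intro hbS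
      obtain ⟨e', he', hbe', hw⟩ := keyL S hS (vb e) hbS
      have hee : e' = e := by
        by_contra hne
        exact hM.2 e' he' e he hne (vb e) ⟨hbe', hmem_b e⟩
      rw [hee] at hw
      exact hw (va e) (hmem_a e) (hadj_ab e he).ne
  have hnotin : ∀ S : Finset V, IsMaxIndepSet G S → ∀ v, (∀ e ∈ M, v ∉ e) → v ∈ S := by
    intro S hS v hv
    by_contra hvS
    obtain ⟨e, he, hve, -⟩ := keyL S hS v hvS
    exact hv e he hve
  -- the codes of maximal independent sets
  set AOf : Finset V → Finset (Sym2 V) := fun S => M.filter (fun e => vb e ∈ S) with hAOf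
  have hAOf_mem : ∀ (S : Finset V) (e : Sym2 V), e ∈ AOf S ↔ (e ∈ M ∧ vb e ∈ S) := by
    intro S e
    simp only [hAOf, Finset.mem_filter]
  have hS_det : ∀ S S' : Finset V, IsMaxIndepSet G S → IsMaxIndepSet G S' →
      AOf S = AOf S' → S = S' := by
    intro S S' hS hS' hA
    ext v
    by_cases hv : ∃ e ∈ M, v ∈ e
    · obtain ⟨e, he, hve⟩ := hv
      have hbiff : vb e ∈ S ↔ vb e ∈ S' := by
        constructor
        · intro h
          have h1 : e ∈ AOf S := (hAOf_mem S e).mpr ⟨he, h⟩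
          rw [hA] at h1
          exact ((hAOf_mem S' e).mp h1).2
        · intro h
          have h1 : e ∈ AOf S' := (hAOf_mem S' e).mpr ⟨he, h⟩
          rw [← hA] at h1
          exact ((hAOf_mem S e).mp h1).2
      rcases (hmemiff e v).mp hve with rfl | rfl
      · rw [hone S hS e he, hone S' hS' e he]
        exact not_congr hbiff
      · exact hbiff
    · push_neg at hv
      exact ⟨fun _ => hnotin S' hS' v hv, fun _ => hnotin S hS v hv⟩
  -- the forcing digraph
  set St : Sym2 V → Sym2 V → Prop :=
    fun f e => e ∈ M ∧ f ∈ M ∧ G.Adj (va e) (vb f) with hSt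
  have hclosed : ∀ S : Finset V, IsMaxIndepSet G S → ∀ f ∈ AOf S, ∀ x,
      Relation.ReflTransGen St f x → x ∈ AOf S := by
    intro S hS f hf x hfx
    induction hfx with
    | refl => exact hf
    | tail _ hstep ih =>
      rename_i y z _
      simp only [hSt] at hstep
      obtain ⟨hzM, hyM, hadj⟩ := hstep
      have hyS : vb y ∈ S := ((hAOf_mem S y).mp ih).2
      have haz : va z ∉ S := fun haS => hS.1 _ haS _ hyS hadj
      have hbz : vb z ∈ S := by
        by_contra hbz
        exact haz ((hone S hS z hzM).mpr hbz)
      exact (hAOf_mem S z).mpr ⟨hzM, hbz⟩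
  -- existence of sources within a code
  have srcEx : ∀ S : Finset V, ∀ n : ℕ, ∀ x ∈ AOf S,
      ((AOf S).filter (fun g => Relation.ReflTransGen St g x)).card ≤ n →
      ∃ f ∈ AOf S, Relation.ReflTransGen St f x ∧
        ∀ g ∈ AOf S, Relation.ReflTransGen St g f → Relation.ReflTransGen St f g := by
    intro S n
    induction n with
    | zero =>
      intro x hx hc
      exfalso
      have hxm : x ∈ (AOf S).filter (fun g => Relation.ReflTransGen St g x) :=
        Finset.mem_filter.mpr ⟨hx, Relation.ReflTransGen.refl⟩
      have := Finset.card_pos.mpr ⟨x, hxm⟩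
      omega
    | succ n ih =>
      intro x hx hc
      by_cases hsrc : ∀ g ∈ AOf S, Relation.ReflTransGen St g x → Relation.ReflTransGen St x g
      · exact ⟨x, hx, Relation.ReflTransGen.refl, hsrc⟩
      · push_neg at hsrc
        obtain ⟨g, hg, hgx, hxg⟩ := hsrc
        have hsubset : (AOf S).filter (fun h => Relation.ReflTransGen St h g) ⊆
            (AOf S).filter (fun h => Relation.ReflTransGen St h x) := by
          intro h hh
          rw [Finset.mem_filter] at hh ⊢
          exact ⟨hh.1, hh.2.trans hgx⟩
        have hxin : x ∈ (AOf S).filter (fun h => Relation.ReflTransGen St h x) :=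
          Finset.mem_filter.mpr ⟨hx, Relation.ReflTransGen.refl⟩
        have hxnot : x ∉ (AOf S).filter (fun h => Relation.ReflTransGen St h g) :=
          fun hmem => hxg (Finset.mem_filter.mp hmem).2
        have hlt := Finset.card_lt_card
          ((Finset.ssubset_iff_of_subset hsubset).mpr ⟨x, hxin, hxnot⟩)
        obtain ⟨f, hf, hfg, hfsrc⟩ := ih g hg (by omega)
        exact ⟨f, hf, hfg.trans hgx, hfsrc⟩
  -- a linear order on edges, for canonical representatives
  letI : LinearOrder (Sym2 V) :=
    LinearOrder.lift' (Fintype.equivFin (Sym2 V)) (Equiv.injective _)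
  set scc : Finset V → Sym2 V → Finset (Sym2 V) := fun S e =>
    (AOf S).filter (fun g => Relation.ReflTransGen St g e ∧ Relation.ReflTransGen St e g)
    with hscc
  have hscc_mem : ∀ (S : Finset V) (e g : Sym2 V), g ∈ scc S e ↔
      (g ∈ AOf S ∧ Relation.ReflTransGen St g e ∧ Relation.ReflTransGen St e g) := by
    intro S e g
    simp only [hscc, Finset.mem_filter]
  set Phi : Finset V → Finset (Sym2 V) := fun S =>
    (AOf S).filter (fun e =>
      (∀ g ∈ AOf S, Relation.ReflTransGen St g e → Relation.ReflTransGen St e g) ∧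
      (scc S e).min = (e : WithTop (Sym2 V))) with hPhi
  have hPhi_mem : ∀ (S : Finset V) (e : Sym2 V), e ∈ Phi S ↔
      (e ∈ AOf S ∧
        (∀ g ∈ AOf S, Relation.ReflTransGen St g e → Relation.ReflTransGen St e g) ∧
        (scc S e).min = (e : WithTop (Sym2 V))) := by
    intro S e
    simp only [hPhi, Finset.mem_filter]
  have hPhi_sub : ∀ S : Finset V, Phi S ⊆ AOf S := by
    intro S e he
    exact ((hPhi_mem S e).mp he).1
  -- distinct elements of Phi S are not inter-reachable
  have hPhi_dist : ∀ S : Finset V, ∀ e ∈ Phi S, ∀ f ∈ Phi S,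
      Relation.ReflTransGen St e f → Relation.ReflTransGen St f e → e = f := by
    intro S e heP f hfP hef hfe
    obtain ⟨heA, hesrc, hemin⟩ := (hPhi_mem S e).mp heP
    obtain ⟨hfA, hfsrc, hfmin⟩ := (hPhi_mem S f).mp hfP
    have hsccEq : scc S e = scc S f := by
      ext g
      rw [hscc_mem, hscc_mem]
      constructor
      · rintro ⟨hg, hge, heg⟩
        exact ⟨hg, hge.trans hef, hfe.trans heg⟩
      · rintro ⟨hg, hgf, hfg⟩
        exact ⟨hg, hgf.trans hfe, hef.trans hfg⟩
    rw [hsccEq, hfmin] at hemin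
    exact_mod_cast hemin.symm
  -- recovery of the code from Phi
  have hrecover : ∀ S : Finset V, IsMaxIndepSet G S → ∀ x : Sym2 V,
      x ∈ AOf S ↔ (x ∈ M ∧ ∃ e ∈ Phi S, Relation.ReflTransGen St e x) := by
    intro S hS x
    constructor
    · intro hx
      refine ⟨((hAOf_mem S x).mp hx).1, ?_⟩
      obtain ⟨f, hf, hfx, hfsrc⟩ := srcEx S _ x hx le_rfl
      have hfscc : f ∈ scc S f := (hscc_mem S f f).mpr
        ⟨hf, Relation.ReflTransGen.refl, Relation.ReflTransGen.refl⟩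
      have hne : (scc S f).Nonempty := ⟨f, hfscc⟩
      obtain ⟨heA, hef, hfe⟩ := (hscc_mem S f ((scc S f).min' hne)).mp ((scc S f).min'_mem hne)
      set e := (scc S f).min' hne with he
      have hesrc : ∀ g ∈ AOf S, Relation.ReflTransGen St g e →
          Relation.ReflTransGen St e g := by
        intro g hg hge
        exact hef.trans (hfsrc g hg (hge.trans hef))
      have hsccEq : scc S e = scc S f := by
        ext g
        rw [hscc_mem, hscc_mem]
        constructor
        · rintro ⟨hg, hge, heg⟩
          exact ⟨hg, hge.trans hef, hfe.trans heg⟩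
        · rintro ⟨hg, hgf, hfg⟩
          exact ⟨hg, hgf.trans hfe, hef.trans hfg⟩
      have hemin : (scc S e).min = (e : WithTop (Sym2 V)) := by
        rw [hsccEq]
        exact (Finset.coe_min' hne).symm
      exact ⟨e, (hPhi_mem S e).mpr ⟨heA, hesrc, hemin⟩, hef.trans hfx⟩
    · rintro ⟨hxM, e, heP, hex⟩
      exact hclosed S hS e (hPhi_sub S heP) x hex
  -- Phi S is an induced matching
  have hPhi_ind : ∀ S : Finset V, IsMaxIndepSet G S → IsInducedMatchingSet G (Phi S) := by
    intro S hS
    constructor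
    · intro e he
      exact hedgeM e ((hAOf_mem S e).mp (hPhi_sub S he)).1
    · intro e heP f hfP hef u hue v hvf
      have heA := hPhi_sub S heP
      have hfA := hPhi_sub S hfP
      have heM : e ∈ M := ((hAOf_mem S e).mp heA).1
      have hfM : f ∈ M := ((hAOf_mem S f).mp hfA).1
      have hbeS : vb e ∈ S := ((hAOf_mem S e).mp heA).2
      have hbfS : vb f ∈ S := ((hAOf_mem S f).mp hfA).2
      have hesrc := ((hPhi_mem S e).mp heP).2.1
      have hfsrc := ((hPhi_mem S f).mp hfP).2.1
      constructor
      · intro huv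
        exact hM.2 e heM f hfM hef u ⟨hue, huv ▸ hvf⟩
      · intro hadj
        rcases (hmemiff e u).mp hue with rfl | rfl <;>
          rcases (hmemiff f v).mp hvf with rfl | rfl
        · exact hS₀.1 _ (haS₀ e heM) _ (haS₀ f hfM) hadj
        · have hRT : Relation.ReflTransGen St f e :=
            Relation.ReflTransGen.single (by simp only [hSt]; exact ⟨heM, hfM, hadj⟩)
          exact hef (hPhi_dist S e heP f hfP (hesrc f hfA hRT) hRT)
        · have hRT : Relation.ReflTransGen St e f :=
            Relation.ReflTransGen.single (by simp only [hSt]; exact ⟨hfM, heM, hadj.symm⟩)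
          exact hef (hPhi_dist S e heP f hfP hRT (hfsrc e heA hRT))
        · exact hS.1 _ hbeS _ hbfS hadj
  -- the injection into induced matchings plus the empty set
  have hmapsto : ∀ S ∈ {s : Finset V | IsMaxIndepSet G s}, Phi S ∈
      ({A : Finset (Sym2 V) | A ⊆ M ∧ A.Nonempty ∧ IsInducedMatchingSet G A} ∪ {∅} :
        Set (Finset (Sym2 V))) := by
    intro S hS
    by_cases hPe : Phi S = ∅
    · right
      exact hPe
    · left
      refine ⟨fun e he => ((hAOf_mem S e).mp (hPhi_sub S he)).1,
        Finset.nonempty_iff_ne_empty.mpr hPe, hPhi_ind S hS⟩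
  have hinj : Set.InjOn Phi {s : Finset V | IsMaxIndepSet G s} := by
    intro S hS S' hS' hPP
    apply hS_det S S' hS hS'
    ext x
    rw [hrecover S hS x, hrecover S' hS' x, hPP]
  have h1 : {s : Finset V | IsMaxIndepSet G s}.ncard ≤
      ({A : Finset (Sym2 V) | A ⊆ M ∧ A.Nonempty ∧ IsInducedMatchingSet G A} ∪ {∅} :
        Set (Finset (Sym2 V))).ncard :=
    Set.ncard_le_ncard_of_injOn Phi hmapsto hinj (Set.toFinite _)
  have h2 := Set.ncard_union_le
    {A : Finset (Sym2 V) | A ⊆ M ∧ A.Nonempty ∧ IsInducedMatchingSet G A}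
    ({∅} : Set (Finset (Sym2 V)))
  rw [Set.ncard_singleton] at h2
  omega
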